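/- Let G be a connected simple graph on a finite vertex set V with edge weights w, and let T be a maximum-weight spanning tree of G. Then for every threshold θ ∈ ℝ and all vertices u, v ∈ V: u and v are joined by a path in T using only tree edges of weight ≥ θ if and only if u and v are joined by a path in G using only edges of weight ≥ θ. Equivalently, for every θ the spanning subgraph of T with edge set {e ∈ T : w(e) ≥ θ} has the same connected components as the spanning subgraph of G with edge set {e ∈ G : w(e) ≥ θ}. -/

import Mathlib

/-!
If an edge `ab` of `G` with `w ab ≥ θ` joined two vertices that are not connected by tree edges
of weight `≥ θ`, then the tree path from `a` to `b` contains an edge `xy` with `w xy < θ` whose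
removal separates `a` from `b`. Exchanging `xy` for `ab` yields another spanning tree, of
strictly larger weight. Hence every `θ`-heavy edge of `G` has its endpoints joined by
`θ`-heavy tree edges, which is the nontrivial inclusion.
-/

open Finset

attribute [local instance] Classical.propDecidable

/-- Twice the total edge weight of a graph `H` (each edge counted in both orientations). -/
noncomputable def totalWeight {V : Type} [Fintype V] (H : SimpleGraph V) (w : Sym2 V → ℝ) : ℝ :=
  ∑ u : V, ∑ v : V, if H.Adj u v then w s(u, v) else 0

namespace SimpleGraph

variable {V : Type*} {G H : SimpleGraph V} {a b : V}

theorem Reachable.mono_of_adj_reachable (hGH : ∀ ⦃u v⦄, G.Adj u v → H.Reachable u v)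
    (h : G.Reachable a b) : H.Reachable a b := by
  rw [reachable_iff_reflTransGen] at h
  induction h with
  | refl => rfl
  | tail _ hadj ih => exact ih.trans (hGH hadj)

theorem IsAcyclic.exists_mem_not_reachable_deleteEdges_singleton (hG : G.IsAcyclic)
    (hab : G.Reachable a b) {S : Set (Sym2 V)} (hS : ¬(G.deleteEdges S).Reachable a b) :
    ∃ e ∈ S, e ∈ G.edgeSet ∧ ¬(G.deleteEdges {e}).Reachable a b := by
  obtain ⟨p, hp⟩ := hab.exists_isPath
  obtain ⟨e, heS, hep⟩ := p.exists_mem_edges_of_not_reachable_deleteEdges hS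
  refine ⟨e, heS, p.edges_subset_edgeSet hep, fun hreach => ?_⟩
  induction e with | h x y =>
  obtain ⟨q, hq⟩ := reachable_deleteEdges_iff_exists_walk.1 hreach
  have hpq : (⟨p, hp⟩ : G.Path a b) = q.toPath := (hG.subsingleton_path a b).elim _ _
  exact hq (q.edges_toPath_subset_edges (congrArg (fun r : G.Path a b => r.1.edges) hpq ▸ hep))

theorem IsTree.deleteEdges_sup_edge {T : SimpleGraph V} (hT : T.IsTree) {x y : V}
    (hxy : T.Adj x y) (hab : ¬T.Adj a b) (hsep : ¬(T.deleteEdges {s(x, y)}).Reachable a b) :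
    (T.deleteEdges {s(x, y)} ⊔ edge a b).IsTree := by
  have hacyc : (T.deleteEdges {s(x, y)} ⊔ edge a b).IsAcyclic :=
    (hT.isAcyclic.anti (deleteEdges_le _)).sup_edge_of_not_reachable hsep
  have hne : a ≠ b := by rintro rfl; exact hsep .rfl
  -- Otherwise adding `xy` back keeps the graph acyclic, yet it then contains `T` together with
  -- the edge `ab ∉ T`, which closes a cycle with the tree path from `a` to `b`.
  have hxy' : (T.deleteEdges {s(x, y)} ⊔ edge a b).Reachable x y := by
    by_contra hnxy
    have hT_le :
        T ≤ (T.deleteEdges {s(x, y)} ⊔ edge a b ⊔ edge x y).deleteEdges {s(a, b)} := by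
      intro u v huv
      have huv_ab : s(u, v) ≠ s(a, b) := fun h => hab (by rw [← mem_edgeSet, ← h]; exact huv)
      simp only [deleteEdges_adj, sup_adj, edge_adj, Set.mem_singleton_iff, Sym2.eq_iff]
        at huv_ab ⊢
      grind [huv.ne]
    have hbridge := isAcyclic_iff_forall_adj_isBridge.1 (hacyc.sup_edge_of_not_reachable hnxy)
      (show (T.deleteEdges {s(x, y)} ⊔ edge a b ⊔ edge x y).Adj a b by simp [edge_adj, hne])
    exact hbridge ((hT.connected.preconnected a b).mono hT_le)
  have : Nonempty V := hT.connected.nonempty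
  refine ⟨⟨fun u v => (hT.connected.preconnected u v).mono_of_adj_reachable ?_⟩, hacyc⟩
  intro u v huv
  by_cases he : s(u, v) = s(x, y)
  · rcases Sym2.eq_iff.1 he with ⟨rfl, rfl⟩ | ⟨rfl, rfl⟩
    exacts [hxy', hxy'.symm]
  · exact Adj.reachable (by simp_all)

end SimpleGraph

open SimpleGraph

theorem totalWeight_eq_two_mul_sum_edgeFinset {V : Type} [Fintype V] (H : SimpleGraph V)
    (w : Sym2 V → ℝ) : totalWeight H w = 2 * ∑ e ∈ H.edgeFinset, w e := by
  have hdart : totalWeight H w = ∑ d : H.Dart, w d.edge := by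
    rw [totalWeight, ← Fintype.sum_prod_type', ← sum_filter]
    exact sum_bij' (fun p hp => ⟨p, (mem_filter.1 hp).2⟩) (fun d _ => d.toProd)
      (by simp) (by simp) (by simp) (by simp) (by simp [Dart.edge])
  rw [hdart, ← sum_fiberwise_of_maps_to (t := H.edgeFinset) (g := Dart.edge) (by simp),
    mul_sum]
  refine sum_congr rfl fun e he => ?_
  rw [sum_congr rfl fun d hd => by rw [(mem_filter.1 hd).2], sum_const,
    dart_edge_fiber_card _ _ (mem_edgeFinset.1 he), nsmul_eq_mul, Nat.cast_two]

theorem totalWeight_sup_edge {V : Type} [Fintype V] {H : SimpleGraph V} (w : Sym2 V → ℝ)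
    {a b : V} (hab : ¬H.Adj a b) (hne : a ≠ b) :
    totalWeight (H ⊔ edge a b) w = totalWeight H w + 2 * w s(a, b) := by
  rw [totalWeight_eq_two_mul_sum_edgeFinset, totalWeight_eq_two_mul_sum_edgeFinset, ← mul_add,
    add_comm, ← sum_cons (by simpa using hab)]
  congr 2
  convert H.edgeFinset_sup_edge hab hne

theorem totalWeight_deleteEdges_singleton {V : Type} [Fintype V] {H : SimpleGraph V}
    (w : Sym2 V → ℝ) {e : Sym2 V} (he : e ∈ H.edgeSet) :
    totalWeight (H.deleteEdges {e}) w = totalWeight H w - 2 * w e := by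
  rw [totalWeight_eq_two_mul_sum_edgeFinset, totalWeight_eq_two_mul_sum_edgeFinset,
    ← mul_sub, ← sum_erase_eq_sub (mem_edgeFinset.2 he)]
  congr 2
  ext
  simp [and_comm]

theorem reachable_of_adj_of_le_weight {V : Type} [Fintype V] {G T : SimpleGraph V}
    {w : Sym2 V → ℝ} (hTG : T ≤ G) (hT : T.IsTree)
    (hmax : ∀ T' : SimpleGraph V, T' ≤ G → T'.IsTree → totalWeight T' w ≤ totalWeight T w)
    {θ : ℝ} {a b : V} (hab : G.Adj a b) (hw : θ ≤ w s(a, b)) :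
    (T.deleteEdges {e | w e < θ}).Reachable a b := by
  by_contra hsep
  obtain ⟨e, he_light, heT, he_sep⟩ :=
    hT.isAcyclic.exists_mem_not_reachable_deleteEdges_singleton (hT.connected.preconnected a b)
      hsep
  induction e with | h x y =>
  have hTab : ¬T.Adj a b := fun h =>
    hsep (deleteEdges_adj.2 ⟨h, (not_lt.2 hw : ¬w s(a, b) < θ)⟩).reachable
  have hle : T.deleteEdges {s(x, y)} ⊔ edge a b ≤ G :=
    sup_le ((deleteEdges_le _).trans hTG) ((edge_le_iff G).2 (Or.inr hab))
  have hgain := hmax _ hle (hT.deleteEdges_sup_edge heT hTab he_sep)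
  rw [totalWeight_sup_edge w (fun h => he_sep h.reachable) hab.ne,
    totalWeight_deleteEdges_singleton w heT] at hgain
  have : w s(x, y) < θ := he_light
  linarith

theorem max_spanning_tree_bottleneck_general {V : Type} [Fintype V]
    (G : SimpleGraph V) (w : Sym2 V → ℝ)
    (T : SimpleGraph V) (hTG : T ≤ G) (hT : T.IsTree)
    (hmax : ∀ T' : SimpleGraph V, T' ≤ G → T'.IsTree → totalWeight T' w ≤ totalWeight T w) :
    ∀ (θ : ℝ) (u v : V),
      (T.deleteEdges {e | w e < θ}).Reachable u v ↔
        (G.deleteEdges {e | w e < θ}).Reachable u v := by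
  intro θ u v
  refine ⟨fun h => h.mono (deleteEdges_mono hTG), Reachable.mono_of_adj_reachable ?_⟩
  intro a b hab
  obtain ⟨hab, hw⟩ := deleteEdges_adj.1 hab
  exact reachable_of_adj_of_le_weight hTG hT hmax hab (not_lt.1 hw)

/-- Bottleneck property of maximum-weight spanning trees: for every threshold `θ`, two
vertices are joined by a path of tree edges of weight `≥ θ` iff they are joined by a path of
`G`-edges of weight `≥ θ`; i.e., the subgraphs of `T` and of `G` keeping only the edges of
weight `≥ θ` have the same connected components. -/
theorem max_spanning_tree_bottleneck {V : Type} [Fintype V]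
    (G : SimpleGraph V) (hG : G.Connected) (w : Sym2 V → ℝ)
    (T : SimpleGraph V) (hTG : T ≤ G) (hT : T.IsTree)
    (hmax : ∀ T' : SimpleGraph V, T' ≤ G → T'.IsTree → totalWeight T' w ≤ totalWeight T w) :
    ∀ (θ : ℝ) (u v : V),
      (T.deleteEdges {e | w e < θ}).Reachable u v ↔
        (G.deleteEdges {e | w e < θ}).Reachable u v :=
  max_spanning_tree_bottleneck_general G w T hTG hT hmax
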